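/- Let S be a finite type, L a type of labels, p a step kernel on S, and R a step stochastic bisimulation for p. Let φ, φ' : S → ℝ satisfy Σ_{s∈H} φ(s) = Σ_{s∈H} φ'(s) for every R-equivalence class H. Then for every R-equivalence class H and every finite sequence of labels A₁,…,A_n, Σ_{s∈H} φ(s)·PT(A₁⋯A_n, s) = Σ_{s∈H} φ'(s)·PT(A₁⋯A_n, s). (Theorem 8.1: for bisimilar processes, the steady-state probabilities to enter an equivalence class and start a given derived step trace from it coincide.) -/

import Mathlib

/-- The overall probability to move from `s` into the set of states `H`
via steps with multiaction part `A`. -/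
noncomputable def PMA {S L : Type*} [Fintype S]
    (p : S → L → S → ℝ) (A : L) (s : S) (H : Set S) : ℝ :=
  ∑ t, H.indicator (p s A) t

/-- The sum of `f` over the set of states `H`. -/
noncomputable def classSum {S : Type*} [Fintype S] (H : Set S) (f : S → ℝ) : ℝ :=
  ∑ s, H.indicator f s

/-- `H` is an equivalence class of the relation `R`. -/
def IsClass {S : Type*} (R : S → S → Prop) (H : Set S) : Prop :=
  ∃ s, H = {t | R s t}

/-- `R` is a step stochastic bisimulation for the step kernel `p`. -/
def IsStepBisim {S L : Type*} [Fintype S]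
    (p : S → L → S → ℝ) (R : S → S → Prop) : Prop :=
  Equivalence R ∧
    ∀ s₁ s₂, R s₁ s₂ → ∀ H : Set S, IsClass R H → ∀ A : L,
      PMA p A s₁ H = PMA p A s₂ H

/-- The derived step-trace probability `PT(A₁⋯Aₙ, s₀)`: the sum over all
tuples `(s₁, …, sₙ)` of the products `Π_{i=1}^n p s_{i−1} A_i s_i`. -/
noncomputable def PT {S L : Type*} [Fintype S]
    (p : S → L → S → ℝ) : List L → S → ℝ
  | [], _ => 1
  | A :: As, s => ∑ t, p s A t * PT p As t

/- Along a bisimulation, `PT p As` is constant on equivalence classes, because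
one step of `PT` sums a class-invariant function against `p s A`, and such a sum only sees the
class masses `PMA`, which agree on related states. On a class `H` the trace factor then comes
out of `classSum H`, leaving `classSum H φ = classSum H φ'`. -/

open Classical in
theorem sum_mul_eq_sum_quotient {S : Type*} [Fintype S] (r : Setoid S) (f g : S → ℝ)
    (hg : ∀ a b, a ≈ b → g a = g b) :
    ∑ t, f t * g t = ∑ q : Quotient r, classSum {t | q.out ≈ t} f * g q.out := by
  rw [← Finset.sum_fiberwise Finset.univ (Quotient.mk r)]
  refine Finset.sum_congr rfl fun q _ => ?_
  have hfiber : ∀ t, Quotient.mk r t = q ↔ q.out ≈ t := fun t =>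
    Quotient.mk_eq_iff_out.trans ⟨Setoid.symm, Setoid.symm⟩
  calc ∑ t with Quotient.mk r t = q, f t * g t
      = ∑ t with Quotient.mk r t = q, f t * g q.out :=
        Finset.sum_congr rfl fun t ht =>
          by rw [hg _ _ ((hfiber t).1 (Finset.mem_filter.1 ht).2)]
    _ = classSum {t | q.out ≈ t} f * g q.out := by
        simp only [← Finset.sum_mul, Finset.sum_filter, hfiber, classSum, Set.indicator_apply,
          Set.mem_ofPred_eq]

theorem IsStepBisim.sum_mul_eq {S L : Type*} [Fintype S] {p : S → L → S → ℝ}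
    {R : S → S → Prop} (hR : IsStepBisim p R) {g : S → ℝ} (hg : ∀ a b, R a b → g a = g b)
    {s₁ s₂ : S} (h : R s₁ s₂) (A : L) :
    ∑ t, p s₁ A t * g t = ∑ t, p s₂ A t * g t := by
  let r : Setoid S := ⟨R, hR.1⟩
  rw [sum_mul_eq_sum_quotient r _ g hg, sum_mul_eq_sum_quotient r _ g hg]
  exact Finset.sum_congr rfl fun q _ =>
    congrArg (· * g q.out) (hR.2 s₁ s₂ h _ ⟨q.out, rfl⟩ A)

theorem IsStepBisim.PT_eq {S L : Type*} [Fintype S] {p : S → L → S → ℝ}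
    {R : S → S → Prop} (hR : IsStepBisim p R) (As : List L) {a b : S} (h : R a b) :
    PT p As a = PT p As b := by
  induction As generalizing a b with
  | nil => rfl
  | cons A As ih => exact hR.sum_mul_eq (fun _ _ => ih) h A

theorem classSum_mul_of_eqOn {S : Type*} [Fintype S] {H : Set S} (ψ : S → ℝ) {c : S → ℝ}
    {k : ℝ} (hc : ∀ u ∈ H, c u = k) :
    classSum H (fun u => ψ u * c u) = classSum H ψ * k := by
  rw [classSum, classSum, Finset.sum_mul]
  refine Finset.sum_congr rfl fun u _ => ?_
  by_cases hu : u ∈ H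
  · simp only [Set.indicator_of_mem hu, hc u hu]
  · simp only [Set.indicator_of_notMem hu, zero_mul]

theorem stepBisim_steady_state_trace_general {S L : Type*} [Fintype S]
    (p : S → L → S → ℝ)
    (R : S → S → Prop) (hR : IsStepBisim p R)
    (φ φ' : S → ℝ)
    (hφ : ∀ H : Set S, IsClass R H → classSum H φ = classSum H φ') :
    ∀ H : Set S, IsClass R H → ∀ As : List L,
      classSum H (fun s => φ s * PT p As s) =
        classSum H (fun s => φ' s * PT p As s) := by
  rintro H ⟨s, rfl⟩ As
  have hPT : ∀ u ∈ {t | R s t}, PT p As u = PT p As s :=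
    fun u hu => hR.PT_eq As (hR.1.symm hu)
  rw [classSum_mul_of_eqOn φ hPT, classSum_mul_of_eqOn φ' hPT, hφ _ ⟨s, rfl⟩]

/-- Theorem 8.1: if two distributions have equal sums over every equivalence
class of a step stochastic bisimulation, then the probabilities to enter an
equivalence class and start a given derived step trace from it coincide. -/
theorem stepBisim_steady_state_trace {S L : Type*} [Fintype S]
    (p : S → L → S → ℝ)
    (hp_nonneg : ∀ s A t, 0 ≤ p s A t)
    (R : S → S → Prop) (hR : IsStepBisim p R)
    (φ φ' : S → ℝ)
    (hφ : ∀ H : Set S, IsClass R H → classSum H φ = classSum H φ') :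
    ∀ H : Set S, IsClass R H → ∀ As : List L,
      classSum H (fun s => φ s * PT p As s) =
        classSum H (fun s => φ' s * PT p As s) :=
  stepBisim_steady_state_trace_general p R hR φ φ' hφ
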